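/- arXiv:2509.05812 — 2 statements merged into one kernel-verified Lean document; each statement's English description precedes it below -/
import Mathlib

section
/- Let u be an ℓ-balanced sequence over the two-letter alphabet {a, b}, and let 𝐚 and 𝐛 be k-balanced sequences over two disjoint alphabets 𝒜 and ℬ, respectively. Then the colouring v = colour(u, 𝐚, 𝐛) is a (k + ℓ)-balanced sequence over 𝒜 ∪ ℬ. -/
open Finset Filter Topology

/-- Number of occurrences of the letter `c` in the factor of `u` of length `n`
starting at position `i`, i.e. `#{t : i ≤ t < i+n, u t = c}`. -/
def cnt {A : Type*} [DecidableEq A] (u : ℕ → A) (c : A) (i n : ℕ) : ℕ :=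
  ((Finset.Ico i (i + n)).filter (fun t => u t = c)).card

/-- A sequence `u` is `k`-balanced if the numbers of occurrences of any letter in
any two factors of the same length differ by at most `k`. -/
def IsBalanced {A : Type*} [DecidableEq A] (k : ℕ) (u : ℕ → A) : Prop :=
  ∀ i j n : ℕ, ∀ c : A, ((cnt u c i n : ℤ) - (cnt u c j n : ℤ)).natAbs ≤ k

/-- The letter `c` has frequency `f` in the sequence `u`. -/
def HasFreq {A : Type*} [DecidableEq A] (u : ℕ → A) (c : A) (f : ℝ) : Prop :=
  Tendsto (fun n : ℕ => (cnt u c 0 n : ℝ) / n) atTop (𝓝 f)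

/-- Colouring of a binary sequence `u` (letter `a` is `true`, letter `b` is `false`)
by a sequence `va` over `A` and a sequence `vb` over `B` (disjoint alphabets,
realized as the two summands of `A ⊕ B`): the `n`-th occurrence of `a` in `u`
is replaced by `va n`, and the `n`-th occurrence of `b` by `vb n`. -/
def colour {A B : Type*} (u : ℕ → Bool) (va : ℕ → A) (vb : ℕ → B) (N : ℕ) : A ⊕ B :=
  if u N then Sum.inl (va (cnt u true 0 N)) else Sum.inr (vb (cnt u false 0 N))

lemma cnt_succ' {A : Type*} [DecidableEq A] (u : ℕ → A) (c : A) (i n : ℕ) :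
    cnt u c i (n + 1) = cnt u c i n + (if u (i + n) = c then 1 else 0) := by
  unfold cnt
  have : i + (n + 1) = (i + n) + 1 := by omega
  rw [this, Nat.Ico_succ_right_eq_insert_Ico (by omega), Finset.filter_insert]
  split
  · rw [Finset.card_insert_of_notMem (by simp)]
  · simp

lemma cnt_split' {A : Type*} [DecidableEq A] (u : ℕ → A) (c : A) (i m d : ℕ) :
    cnt u c i (m + d) = cnt u c i m + cnt u c (i + m) d := by
  induction d with
  | zero => simp [cnt]
  | succ d ih =>
    have h1 : m + (d + 1) = (m + d) + 1 := by omega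
    rw [h1, cnt_succ', ih, cnt_succ']
    have : i + (m + d) = (i + m) + d := by omega
    rw [this]; omega

lemma cnt_le' {A : Type*} [DecidableEq A] (u : ℕ → A) (c : A) (i n : ℕ) :
    cnt u c i n ≤ n := by
  calc cnt u c i n ≤ (Finset.Ico i (i + n)).card := Finset.card_filter_le _ _
    _ = n := by rw [Nat.card_Ico]; omega

lemma cnt_colour_inl' {A B : Type*} [DecidableEq A] [DecidableEq B]
    (u : ℕ → Bool) (va : ℕ → A) (vb : ℕ → B) (c : A) (i n : ℕ) :
    cnt (colour u va vb) (Sum.inl c) i n = cnt va c (cnt u true 0 i) (cnt u true i n) := by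
  induction n with
  | zero => simp [cnt]
  | succ n ih =>
    rw [cnt_succ', cnt_succ' u true i n, ih]
    cases hun : u (i + n)
    · simp [colour, hun]
    · have hp : cnt u true 0 i + cnt u true i n = cnt u true 0 (i + n) := by
        have := cnt_split' u true 0 i n; simpa using this.symm
      rw [if_pos rfl, cnt_succ', hp]
      simp [colour, hun]

lemma cnt_colour_inr' {A B : Type*} [DecidableEq A] [DecidableEq B]
    (u : ℕ → Bool) (va : ℕ → A) (vb : ℕ → B) (c : B) (i n : ℕ) :
    cnt (colour u va vb) (Sum.inr c) i n = cnt vb c (cnt u false 0 i) (cnt u false i n) := by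
  induction n with
  | zero => simp [cnt]
  | succ n ih =>
    rw [cnt_succ', cnt_succ' u false i n, ih]
    cases hun : u (i + n)
    · have hp : cnt u false 0 i + cnt u false i n = cnt u false 0 (i + n) := by
        have := cnt_split' u false 0 i n; simpa using this.symm
      rw [if_pos rfl, cnt_succ', hp]
      simp [colour, hun]
    · simp [colour, hun]

lemma balanced_aux' {A : Type*} [DecidableEq A] (k ℓ : ℕ) (va : ℕ → A)
    (ha : IsBalanced k va) (c : A) (p₁ p₂ m₁ m₂ : ℕ)
    (h : ((m₁ : ℤ) - m₂).natAbs ≤ ℓ) :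
    ((cnt va c p₁ m₁ : ℤ) - cnt va c p₂ m₂).natAbs ≤ k + ℓ := by
  rcases le_total m₁ m₂ with hm | hm
  · obtain ⟨d, rfl⟩ := Nat.exists_eq_add_of_le hm
    have h2 := cnt_split' va c p₂ m₁ d
    have h3 := cnt_le' va c (p₂ + m₁) d
    have h4 := ha p₁ p₂ m₁ c
    omega
  · obtain ⟨d, rfl⟩ := Nat.exists_eq_add_of_le hm
    have h2 := cnt_split' va c p₁ m₂ d
    have h3 := cnt_le' va c (p₁ + m₂) d
    have h4 := ha p₁ p₂ m₂ c
    omega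

/-- If `u` is `ℓ`-balanced and `va`, `vb` are `k`-balanced, then
`colour(u, va, vb)` is `(k + ℓ)`-balanced. -/
theorem colour_balanced {A B : Type*} [DecidableEq A] [DecidableEq B]
    (k ℓ : ℕ) (u : ℕ → Bool) (va : ℕ → A) (vb : ℕ → B)
    (hu : IsBalanced ℓ u) (ha : IsBalanced k va) (hb : IsBalanced k vb) :
    IsBalanced (k + ℓ) (colour u va vb) := by
  intro i j n c
  cases c with
  | inl ca =>
    rw [cnt_colour_inl', cnt_colour_inl']
    exact balanced_aux' k ℓ va ha ca _ _ _ _ (hu i j n true)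
  | inr cb =>
    rw [cnt_colour_inr', cnt_colour_inr']
    exact balanced_aux' k ℓ vb hb cb _ _ _ _ (hu i j n false)
end

section
/- A sequence u over a finite alphabet 𝒜 is k-balanced for some k ∈ ℕ if and only if u has uniform letter frequencies (f_a)_{a∈𝒜} and there exists a constant B such that for every factor w of u and every letter a ∈ 𝒜, one has | |w|_a − f_a·|w| | ≤ B, where |w| is the length of w and |w|_a the number of occurrences of a in w. -/
/-!
If `u` is `k`-balanced, the prefix counts `s n = |u₀ ⋯ uₙ₋₁|_c` are quasi-additive:
`|s (m + n) - s m - s n| ≤ k`. Then `s + k` and `k - s` are subadditive, so by Fekete's lemma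
`s n / n` converges to some `f` with `f ≤ (s n + k) / n` and `-f ≤ (k - s n) / n`, i.e.
`|s n - f n| ≤ k`; balancedness moves this to every factor with constant `2k`, and a bounded
discrepancy forces the frequency along every sequence of positions. Conversely, a discrepancy
bound `B` makes `u` `⌈2B⌉`-balanced by the triangle inequality.
-/

open Finset Filter Topology

def QuasiAdditive (x : ℕ → ℝ) (k : ℝ) : Prop :=
  ∀ m n, |x (m + n) - x m - x n| ≤ k

namespace QuasiAdditive

variable {x : ℕ → ℝ} {k : ℝ}

lemma mul_sub_sub_le_apply (h : QuasiAdditive x k) (n : ℕ) :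
    n * (x 1 - k) - k ≤ x n := by
  induction n with
  | zero =>
    have := le_of_abs_le (h 0 0)
    simp only [add_zero, sub_self, zero_sub] at this
    simp only [CharP.cast_eq_zero, zero_mul, zero_sub]
    linarith
  | succ n ih =>
    have := neg_le_of_abs_le (h n 1)
    push_cast
    linarith

lemma subadditive_add_const (h : QuasiAdditive x k) :
    Subadditive (fun n => x n + k) := fun m n => by
  linarith [le_of_abs_le (h m n)]

lemma bddBelow_add_const_div (h : QuasiAdditive x k) :
    BddBelow (Set.range fun n : ℕ => (x n + k) / n) := by
  refine ⟨min 0 (x 1 - k), Set.forall_mem_range.2 fun n => ?_⟩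
  rcases Nat.eq_zero_or_pos n with rfl | hn
  · simp
  · rw [le_div_iff₀ (by positivity)]
    have := mul_sub_sub_le_apply h n
    nlinarith [min_le_right 0 (x 1 - k), (by exact_mod_cast hn : (1 : ℝ) ≤ n)]

theorem exists_tendsto_div_and_abs_sub_mul_le (h : QuasiAdditive x k) :
    ∃ f : ℝ, Tendsto (fun n => x n / n) atTop (𝓝 f) ∧ ∀ n : ℕ, |x n - f * n| ≤ k := by
  have h' : QuasiAdditive (fun n => -x n) k := fun m n => by
    rw [← abs_neg]; convert h m n using 2; ring
  have hsub := subadditive_add_const h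
  have hsub' := subadditive_add_const h'
  have hlim := hsub.tendsto_lim (bddBelow_add_const_div h)
  have hlim' := hsub'.tendsto_lim (bddBelow_add_const_div h')
  have hk : Tendsto (fun n : ℕ => k / n) atTop (𝓝 0) := tendsto_const_div_atTop_nhds_zero_nat k
  have hx : Tendsto (fun n => x n / n) atTop (𝓝 hsub.lim) := by
    simpa [add_div] using hlim.sub hk
  have hx' : Tendsto (fun n => x n / n) atTop (𝓝 (-hsub'.lim)) := by
    simpa [add_div, neg_div] using (hlim'.sub hk).neg
  have heq : hsub'.lim = -hsub.lim := by linarith [tendsto_nhds_unique hx hx']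
  refine ⟨hsub.lim, hx, fun n => ?_⟩
  rcases Nat.eq_zero_or_pos n with rfl | hn
  · simpa using h 0 0
  have hn' : (0 : ℝ) < n := by exact_mod_cast hn
  have hle := hsub.lim_le_div (bddBelow_add_const_div h) hn.ne'
  have hle' := hsub'.lim_le_div (bddBelow_add_const_div h') hn.ne'
  rw [le_div_iff₀ hn'] at hle hle'
  rw [heq] at hle'
  exact abs_le.2 ⟨by linarith, by linarith⟩

end QuasiAdditive

lemma tendsto_div_of_abs_sub_mul_le {y : ℕ → ℝ} {f B : ℝ} (h : ∀ n, |y n - f * n| ≤ B) :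
    Tendsto (fun n => y n / n) atTop (𝓝 f) := by
  rw [tendsto_iff_dist_tendsto_zero]
  refine squeeze_zero' (.of_forall fun _ => dist_nonneg) ?_
    (tendsto_const_div_atTop_nhds_zero_nat B)
  filter_upwards [eventually_gt_atTop 0] with n hn
  have hn' : (0 : ℝ) < n := by exact_mod_cast hn
  rw [Real.dist_eq, div_sub' hn'.ne', abs_div, abs_of_pos hn']
  exact div_le_div_of_nonneg_right (mul_comm f n ▸ h n) hn'.le

section Balanced

variable {A : Type*} [DecidableEq A]

lemma cnt_add (u : ℕ → A) (c : A) (i m n : ℕ) :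
    cnt u c i (m + n) = cnt u c i m + cnt u c (i + m) n := by
  unfold cnt
  rw [← add_assoc, ← Ico_union_Ico_eq_Ico (Nat.le_add_right i m) (Nat.le_add_right _ n),
    filter_union, card_union_of_disjoint
      (disjoint_filter_filter (Ico_disjoint_Ico_consecutive _ _ _))]

variable {u : ℕ → A}

lemma isBalanced_iff_abs_sub_le (k : ℕ) :
    IsBalanced k u ↔ ∀ i j n : ℕ, ∀ c : A, |(cnt u c i n : ℝ) - cnt u c j n| ≤ k := by
  refine forall₄_congr fun i j n c => ?_
  rw [← Nat.cast_le (α := ℝ), Nat.cast_natAbs, Int.cast_abs]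
  push_cast
  rfl

lemma IsBalanced.exists_abs_cnt_sub_mul_le {k : ℕ} (hu : IsBalanced k u) (c : A) :
    ∃ f : ℝ, ∀ i n : ℕ, |(cnt u c i n : ℝ) - f * n| ≤ 2 * k := by
  rw [isBalanced_iff_abs_sub_le] at hu
  have hadd : QuasiAdditive (fun n => cnt u c 0 n) k := fun m n => by
    dsimp only
    rw [cnt_add, zero_add, Nat.cast_add, add_sub_cancel_left]
    exact hu m 0 n c
  obtain ⟨f, -, hf⟩ := hadd.exists_tendsto_div_and_abs_sub_mul_le
  refine ⟨f, fun i n => ?_⟩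
  calc |(cnt u c i n : ℝ) - f * n|
      ≤ |(cnt u c i n : ℝ) - cnt u c 0 n| + |(cnt u c 0 n : ℝ) - f * n| := abs_sub_le _ _ _
    _ ≤ k + k := add_le_add (hu i 0 n c) (hf n)
    _ = 2 * k := by ring

lemma isBalanced_of_abs_cnt_sub_mul_le {f : A → ℝ} {B : ℝ}
    (h : ∀ (a : A) (i n : ℕ), |(cnt u a i n : ℝ) - f a * n| ≤ B) : IsBalanced ⌈2 * B⌉₊ u := by
  rw [isBalanced_iff_abs_sub_le]
  intro i j n c
  calc |(cnt u c i n : ℝ) - cnt u c j n|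
      ≤ |(cnt u c i n : ℝ) - f c * n| + |f c * n - cnt u c j n| := abs_sub_le _ _ _
    _ ≤ 2 * B := by linarith [h c i n, abs_sub_comm (cnt u c j n : ℝ) (f c * n) ▸ h c j n]
    _ ≤ ⌈2 * B⌉₊ := Nat.le_ceil _

end Balanced

theorem balanced_iff_uniform_freq_bounded_discrepancy_general
    {A : Type*} [DecidableEq A] (u : ℕ → A) :
    (∃ k : ℕ, IsBalanced k u) ↔
      ∃ f : A → ℝ,
        (∀ a : A, ∀ k : ℕ → ℕ,
          Tendsto (fun n : ℕ => (cnt u a (k n) n : ℝ) / n) atTop (𝓝 (f a))) ∧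
        ∃ B : ℝ, ∀ (a : A) (i n : ℕ), |(cnt u a i n : ℝ) - f a * n| ≤ B := by
  constructor
  · rintro ⟨k, hk⟩
    choose f hf using hk.exists_abs_cnt_sub_mul_le
    exact ⟨f, fun a s => tendsto_div_of_abs_sub_mul_le fun n => hf a (s n) n, 2 * k, hf⟩
  · rintro ⟨f, -, B, hB⟩
    exact ⟨_, isBalanced_of_abs_cnt_sub_mul_le hB⟩

/-- Berthé–Delecroix: a sequence over a finite alphabet is `k`-balanced for some
`k` iff it has uniform letter frequencies `(f_a)` and there is a constant `B`
with `| |w|_a - f_a·|w| | ≤ B` for every factor `w` and letter `a`. -/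
theorem balanced_iff_uniform_freq_bounded_discrepancy
    {A : Type*} [Fintype A] [DecidableEq A] (u : ℕ → A) :
    (∃ k : ℕ, IsBalanced k u) ↔
      ∃ f : A → ℝ,
        (∀ a : A, ∀ k : ℕ → ℕ,
          Tendsto (fun n : ℕ => (cnt u a (k n) n : ℝ) / n) atTop (𝓝 (f a))) ∧
        ∃ B : ℝ, ∀ (a : A) (i n : ℕ), |(cnt u a i n : ℝ) - f a * n| ≤ B :=
  balanced_iff_uniform_freq_bounded_discrepancy_general u
end
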